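/- Suppose r is even. Then for each sign ε ∈ {+1,−1} the following hold in Cl ⊗ Cl: p_{ε,−ε}·Π_{m=1}^{r/2} ( Ĉ − c_{2m−1}·(1⊗1) ) = 0, and p_{εε}·Π_{m=0}^{r/2} ( Ĉ − c_{2m}·(1⊗1) ) = 0, where c_k := (2k(2r−k) − r(2r−1))/(16(r−1)). -/

import Mathlib

/-!
The elements `e_i = Γ_i ⊗ Γ_i` of `Cl ⊗ Cl` commute pairwise and square to `1`. We have
`I₁ = ∑ e_i` and `I₂ = I₁² − 2r`, so `Ĉ − c_k` is a scalar multiple of `I₁² − (2r − 2k)²`; and for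
even `r` the product `∏ e_i` is `Γ_{2r+1} ⊗ Γ_{2r+1}`, which acts on the range of `p_{εε'}` as `εε'`.

In a commutative ring in which `2` is a unit, let `e_1, …, e_n` square to `1`. Splitting `e_1` off
with the idempotents `(1 ± e_1)/2`, on which `e_1` acts as `±1`, shows by induction on `n` that
`(1 + (−1)^j ∏ e_i) · p(∑ e_i) = 0` for every polynomial `p` vanishing at the points `n − 2c`,
`0 ≤ c ≤ n`, with `c + j` even. The two products in the theorem are polynomials of this kind in
`I₁`, for `j = 1` and for `j = 0`.
-/

open scoped TensorProduct

noncomputable section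

/-- The quadratic form `x₁² + ⋯ + x_{2r}²` on `ℂ^{2r}`. -/
def Qf (r : ℕ) : QuadraticForm ℂ (Fin (2*r) → ℂ) :=
  QuadraticMap.weightedSumSquares ℂ (fun _ : Fin (2*r) => (1:ℂ))

/-- The Clifford algebra of `Qf r`. -/
abbrev Cl (r : ℕ) := CliffordAlgebra (Qf r)

/-- The generators `Γ_i`. -/
def Γgen (r : ℕ) (i : Fin (2*r)) : Cl r :=
  CliffordAlgebra.ι (Qf r) (Pi.single i 1)

/-- The antisymmetrised products `Γ_{[i₁…i_k]}`. -/
def Γbr (r k : ℕ) (i : Fin k → Fin (2*r)) : Cl r :=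
  ((k.factorial : ℂ))⁻¹ •
    ∑ σ : Equiv.Perm (Fin k),
      ((Equiv.Perm.sign σ : ℤ) : ℂ) • (List.ofFn fun j => Γgen r (i (σ j))).prod

/-- The invariants `I_k ∈ Cl ⊗ Cl`. -/
def Ik (r k : ℕ) : Cl r ⊗[ℂ] Cl r :=
  ∑ i : Fin k → Fin (2*r), (Γbr r k i) ⊗ₜ[ℂ] (Γbr r k i)

/-- The split Casimir element `Ĉ = −I₂/(16(2r−2))`. -/
def sC (r : ℕ) : Cl r ⊗[ℂ] Cl r := (-(16*(2*(r:ℂ)-2))⁻¹) • Ik r 2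

/-- The top element `Γ_{2r+1} = (−i)^r Γ₁⋯Γ_{2r}`. -/
def Γtop (r : ℕ) : Cl r :=
  ((-Complex.I)^r) • (List.ofFn fun i : Fin (2*r) => Γgen r i).prod

/-- The chirality projector `p_ε = (1 + ε Γ_{2r+1})/2`. -/
def pCh (r : ℕ) (ε : ℂ) : Cl r := (2:ℂ)⁻¹ • (1 + ε • Γtop r)

/-- The chirality projectors `p_{εε'} = p_ε ⊗ p_{ε'}`. -/
def ppCh (r : ℕ) (ε ε' : ℂ) : Cl r ⊗[ℂ] Cl r := (pCh r ε) ⊗ₜ[ℂ] (pCh r ε')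

/-- The eigenvalues `c_k = (2k(2r−k) − r(2r−1))/(16(r−1))`. -/
def cEv (r k : ℕ) : ℂ :=
  (2*(k:ℂ)*(2*(r:ℂ)-(k:ℂ)) - (r:ℂ)*(2*(r:ℂ)-1)) / (16*((r:ℂ)-1))

/-- The spectral projectors `P_k = Π_{j≠k} (Ĉ − c_j)/(c_k − c_j)`. -/
def Pk (r k : ℕ) : Cl r ⊗[ℂ] Cl r :=
  (((List.range (r+1)).filter (fun j => j ≠ k)).map
    (fun j => (cEv r k - cEv r j)⁻¹ • (sC r - cEv r j • 1))).prod

/-- `P_r^S = (p_{++} + p_{−−})·P_r`. -/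
def PrS (r : ℕ) : Cl r ⊗[ℂ] Cl r := (ppCh r 1 1 + ppCh r (-1) (-1)) * Pk r r

/-- The ascending factorial `a_k(u) = (u/2)(u/2+1)⋯(u/2+k−1)`. -/
def asc (u : ℂ) (k : ℕ) : ℂ := ∏ j ∈ Finset.range k, (u/2 + (j:ℂ))

open Polynomial

lemma mul_aeval_eq_of_mul_sub_eq_zero {R A : Type*} [CommRing R] [CommRing A] [Algebra R A]
    {y a b : A} (h : y * (a - b) = 0) (p : R[X]) : y * aeval a p = y * aeval b p := by
  obtain ⟨c, hc⟩ := sub_dvd_eval_sub a b (p.map (algebraMap R A))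
  rw [← sub_eq_zero, ← mul_sub, aeval_def, aeval_def, ← eval_map, ← eval_map, hc, ← mul_assoc,
    h, zero_mul]

theorem one_add_prod_mul_aeval_sum_eq_zero {R A : Type*} [CommRing R] [CommRing A] [Algebra R A]
    (h2 : IsUnit (2 : A)) {n : ℕ} (e : Fin n → A) (he : ∀ i, e i ^ 2 = 1) (j : ℕ) (p : R[X])
    (hp : ∀ c ≤ n, Even (c + j) → p.eval ((n : R) - 2 * c) = 0) :
    (1 + (-1) ^ j * ∏ i, e i) * aeval (∑ i, e i) p = 0 := by
  induction n generalizing j p with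
  | zero =>
    rcases Nat.even_or_odd j with hj | hj
    · have hp0 : p.eval 0 = 0 := by simpa using hp 0 le_rfl (by simpa using hj)
      simp [← coeff_zero_eq_aeval_zero', coeff_zero_eq_eval_zero, hp0]
    · simp [hj.neg_one_pow]
  | succ n ih =>
    rw [Fin.sum_univ_succ, Fin.prod_univ_succ]
    set F := ∑ i : Fin n, e i.succ
    set T := ∏ i : Fin n, e i.succ
    set x := (1 + (-1) ^ j * (e 0 * T)) * aeval (e 0 + F) p
    have he0 := he 0
    have hplus : (1 + e 0) * x = 0 := by
      have h := mul_aeval_eq_of_mul_sub_eq_zero (y := 1 + e 0) (a := e 0 + F) (b := F + 1)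
        (by linear_combination he0) p
      calc (1 + e 0) * x = (1 + (-1) ^ j * T) * ((1 + e 0) * aeval (e 0 + F) p) := by
            linear_combination ((-1) ^ j * T * aeval (e 0 + F) p) * he0
        _ = (1 + e 0) * ((1 + (-1) ^ j * T) * aeval F (p.comp (X + 1))) := by
            rw [h, aeval_comp]; simp only [map_add, aeval_X, map_one]; ring
        _ = 0 := by
          rw [ih _ (fun i => he _) j _ fun c hc hcj => ?_, mul_zero]
          convert hp c (by omega) hcj using 1
          simp only [eval_comp, eval_add, eval_X, eval_one]
          push_cast; ring_nf
    have hminus : (1 - e 0) * x = 0 := by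
      have h := mul_aeval_eq_of_mul_sub_eq_zero (y := 1 - e 0) (a := e 0 + F) (b := F - 1)
        (by linear_combination -he0) p
      calc (1 - e 0) * x = (1 + (-1) ^ (j + 1) * T) * ((1 - e 0) * aeval (e 0 + F) p) := by
            linear_combination (-(-1) ^ j * T * aeval (e 0 + F) p) * he0
        _ = (1 - e 0) * ((1 + (-1) ^ (j + 1) * T) * aeval F (p.comp (X - 1))) := by
            rw [h, aeval_comp]; simp only [aeval_sub, aeval_X, map_one]; ring
        _ = 0 := by
          rw [ih _ (fun i => he _) (j + 1) _ fun c hc hcj => ?_, mul_zero]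
          convert hp (c + 1) (by omega) (by rwa [add_right_comm]) using 1
          simp only [eval_comp, eval_sub, eval_X, eval_one]
          push_cast; ring_nf
    have : 2 * x = 0 := by linear_combination hplus + hminus
    exact (h2.mul_right_eq_zero).mp this

lemma List.prod_mul_of_anticomm {A : Type*} [Ring A] {a : A} {l : List A}
    (h : ∀ b ∈ l, b * a = -(a * b)) : l.prod * a = (-1) ^ l.length * (a * l.prod) := by
  induction l with
  | nil => simp
  | cons b l ih =>
    rw [List.forall_mem_cons] at h
    have hb : b * (-1) ^ l.length = (-1) ^ l.length * b :=
      ((Commute.neg_one_left b).pow_left _).eq.symm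
    rw [List.prod_cons, mul_assoc, ih h.2, ← mul_assoc, hb, mul_assoc, ← mul_assoc b, h.1,
      List.length_cons, pow_succ]
    noncomm_ring

lemma List.prod_mul_self_of_anticomm {A : Type*} [Ring A] {l : List A}
    (hsq : ∀ a ∈ l, a * a = 1) (hanti : l.Pairwise fun a b => b * a = -(a * b)) :
    l.prod * l.prod = (-1) ^ l.length.choose 2 := by
  induction l with
  | nil => simp
  | cons a l ih =>
    rw [List.forall_mem_cons] at hsq
    rw [List.pairwise_cons] at hanti
    have ha : a * (-1) ^ l.length = (-1) ^ l.length * a :=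
      ((Commute.neg_one_left a).pow_left _).eq.symm
    rw [List.prod_cons, List.length_cons, Nat.choose_succ_succ, Nat.choose_one_right, pow_add,
      ← ih hsq.2 hanti.2, mul_assoc, ← mul_assoc l.prod, l.prod_mul_of_anticomm hanti.1]
    simp only [← mul_assoc]
    rw [ha, mul_assoc _ a a, hsq.1, mul_one, mul_assoc]

lemma List.prod_map_tmul {R A B ι : Type*} [CommSemiring R] [Semiring A] [Semiring B]
    [Algebra R A] [Algebra R B] (l : List ι) (f : ι → A) (g : ι → B) :
    (l.map fun i => f i ⊗ₜ[R] g i).prod = (l.map f).prod ⊗ₜ[R] (l.map g).prod := by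
  induction l with
  | nil => rfl
  | cons i l ih => simp [ih, Algebra.TensorProduct.tmul_mul_tmul]

section Clifford

variable {r : ℕ}

lemma polar_single_single (i j : Fin (2 * r)) :
    QuadraticMap.polar (Qf r) (Pi.single i 1) (Pi.single j 1) = if i = j then 2 else 0 := by
  rw [QuadraticMap.polar]
  split_ifs with h
  · subst h
    rw [← Pi.single_add]
    simp only [Qf, QuadraticMap.weightedSumSquares_apply, Pi.single_apply, mul_ite, ite_mul,
      zero_mul, mul_zero, smul_eq_mul, one_mul, Finset.sum_ite_eq', Finset.mem_univ, if_true]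
    norm_num
  · simp [Qf, QuadraticMap.weightedSumSquares_apply, Pi.single_apply, mul_add,
      Finset.sum_add_distrib, h, Ne.symm h]

lemma Γgen_mul_add_swap (i j : Fin (2 * r)) :
    Γgen r i * Γgen r j + Γgen r j * Γgen r i = if i = j then (2 : ℂ) • 1 else 0 := by
  rw [Γgen, Γgen, CliffordAlgebra.ι_mul_ι_add_swap, polar_single_single,
    apply_ite (algebraMap ℂ _), Algebra.algebraMap_eq_smul_one, map_zero]

lemma Γgen_mul_self (i : Fin (2 * r)) : Γgen r i * Γgen r i = 1 := by
  have hQ : Qf r (Pi.single i 1) = 1 := by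
    simp [Qf, QuadraticMap.weightedSumSquares_apply, Pi.single_apply]
  rw [Γgen, CliffordAlgebra.ι_sq_scalar, hQ, map_one]

lemma Γgen_mul_comm_of_ne {i j : Fin (2 * r)} (h : i ≠ j) :
    Γgen r j * Γgen r i = -(Γgen r i * Γgen r j) := by
  rw [eq_neg_iff_add_eq_zero, add_comm, Γgen_mul_add_swap, if_neg h]

lemma Γbr_one (i : Fin 1 → Fin (2 * r)) : Γbr r 1 i = Γgen r (i 0) := by
  simp [Γbr]

lemma Γbr_two (i : Fin 2 → Fin (2 * r)) :
    Γbr r 2 i = Γgen r (i 0) * Γgen r (i 1) - if i 0 = i 1 then 1 else 0 := by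
  rw [Γbr, show (Finset.univ : Finset (Equiv.Perm (Fin 2))) = {1, Equiv.swap 0 1} by decide,
    Finset.sum_pair (by decide)]
  have hswap := eq_sub_of_add_eq (Γgen_mul_add_swap (i 1) (i 0))
  simp only [List.ofFn_succ, List.ofFn_zero, List.prod_cons, List.prod_nil, mul_one]
  simp only [Nat.factorial_two, Nat.cast_ofNat, Equiv.Perm.sign_one, Units.val_one, Int.cast_one,
    Equiv.Perm.coe_one, id_eq, Fin.succ_zero_eq_one, one_smul, Equiv.Perm.sign_swap', zero_ne_one,
    if_false, Units.val_neg, Int.cast_neg, Equiv.swap_apply_left, Equiv.swap_apply_right, hswap,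
    eq_comm (a := i 1), neg_smul, neg_sub, smul_add]
  split_ifs <;> module

lemma Ik_one : Ik r 1 = ∑ i, Γgen r i ⊗ₜ[ℂ] Γgen r i := by
  simp only [Ik, Γbr_one]
  exact (Equiv.funUnique (Fin 1) (Fin (2 * r))).sum_comp (fun i => Γgen r i ⊗ₜ[ℂ] Γgen r i)

lemma Ik_two : Ik r 2 = Ik r 1 ^ 2 - (2 * r : ℂ) • 1 := by
  have hterm (i : Fin 2 → Fin (2 * r)) : Γbr r 2 i ⊗ₜ[ℂ] Γbr r 2 i =
      (Γgen r (i 0) * Γgen r (i 1)) ⊗ₜ[ℂ] (Γgen r (i 0) * Γgen r (i 1)) -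
        if i 0 = i 1 then 1 else 0 := by
    rw [Γbr_two]
    split_ifs with h
    · simp [h, Γgen_mul_self, Algebra.TensorProduct.one_def]
    · simp
  calc Ik r 2 = ∑ p : Fin (2 * r) × Fin (2 * r), ((Γgen r p.1 * Γgen r p.2) ⊗ₜ[ℂ]
        (Γgen r p.1 * Γgen r p.2) - if p.1 = p.2 then 1 else 0) := by
        rw [Ik, ← (piFinTwoEquiv fun _ => Fin (2 * r)).sum_comp]
        exact Finset.sum_congr rfl fun i _ => hterm i
    _ = Ik r 1 ^ 2 - (2 * r : ℂ) • 1 := by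
        rw [Fintype.sum_prod_type, Ik_one, sq, Finset.sum_mul_sum]
        simp only [Finset.sum_sub_distrib, Finset.sum_ite_eq, Finset.mem_univ, if_true,
          Finset.sum_const, Finset.card_univ, Fintype.card_fin, nsmul_eq_mul, Nat.cast_mul,
          Nat.cast_ofNat, mul_one, Algebra.TensorProduct.tmul_mul_tmul, sub_right_inj]
        rw [Algebra.smul_def, mul_one, map_mul, map_ofNat, map_natCast]

variable (r) in
def casimirFactor (k : ℕ) : ℂ[X] :=
  C (-(16 * (2 * r - 2) : ℂ)⁻¹) * (X ^ 2 - C ((2 * r - 2 * k : ℂ) ^ 2))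

lemma sC_sub_cEv_smul_one (hr : r ≠ 1) (k : ℕ) :
    sC r - cEv r k • 1 = aeval (Ik r 1) (casimirFactor r k) := by
  have hr' : (r : ℂ) - 1 ≠ 0 := sub_ne_zero.mpr (by exact_mod_cast hr)
  rw [sC, Ik_two, cEv, casimirFactor, map_mul, aeval_C, map_sub, map_pow, aeval_X, aeval_C,
    Algebra.algebraMap_eq_smul_one, Algebra.algebraMap_eq_smul_one, smul_mul_assoc, one_mul]
  match_scalars
  · ring
  · field_simp
    ring

lemma Γtop_mul_self : Γtop r * Γtop r = 1 := by
  have hprod :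
      (List.ofFn (Γgen r)).prod * (List.ofFn (Γgen r)).prod = (-1) ^ (2 * r).choose 2 := by
    refine List.prod_mul_self_of_anticomm ?_ (List.pairwise_ofFn.mpr fun i j hij => ?_) |>.trans ?_
    · simp [List.mem_ofFn, Γgen_mul_self]
    · exact Γgen_mul_comm_of_ne hij.ne
    · simp
  have hpar : Even (r + (2 * r).choose 2) := by
    rcases Nat.eq_zero_or_pos r with rfl | hr
    · decide
    rw [Nat.choose_two_right, mul_assoc, Nat.mul_div_cancel_left _ two_pos]
    simp [Nat.even_add, Nat.even_mul, Nat.even_sub (show 1 ≤ 2 * r by omega)]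
  rw [Γtop, smul_mul_smul_comm, hprod, ← mul_pow, neg_mul_neg, Complex.I_mul_I,
    Algebra.smul_def, map_pow, map_neg, map_one, ← pow_add, hpar.neg_one_pow]

lemma pCh_mul_Γtop {ε : ℂ} (hε : ε * ε = 1) : pCh r ε * Γtop r = ε • pCh r ε := by
  rw [pCh, smul_mul_assoc, add_mul, smul_mul_assoc, Γtop_mul_self, one_mul]
  linear_combination (norm := module) hε • (-(2:ℂ)⁻¹ • Γtop r)

lemma Γgen_tmul_sq (i : Fin (2 * r)) : (Γgen r i ⊗ₜ[ℂ] Γgen r i) ^ 2 = 1 := by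
  rw [sq, Algebra.TensorProduct.tmul_mul_tmul, Γgen_mul_self, Algebra.TensorProduct.one_def]

lemma Γgen_tmul_commute (i j : Fin (2 * r)) :
    Commute (Γgen r i ⊗ₜ[ℂ] Γgen r i) (Γgen r j ⊗ₜ[ℂ] Γgen r j) := by
  by_cases h : i = j
  · rw [h]
  · rw [Commute, SemiconjBy, Algebra.TensorProduct.tmul_mul_tmul,
      Algebra.TensorProduct.tmul_mul_tmul, Γgen_mul_comm_of_ne h, TensorProduct.neg_tmul,
      TensorProduct.tmul_neg, neg_neg]

open scoped IsMulCommutative in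
lemma one_add_mul_aeval_Ik_one_eq_zero (j : ℕ) (p : ℂ[X])
    (hp : ∀ c ≤ 2 * r, Even (c + j) → p.eval (((2 * r : ℕ) : ℂ) - 2 * c) = 0) :
    (1 + (-1 : ℂ) ^ j • (List.ofFn fun i => Γgen r i ⊗ₜ[ℂ] Γgen r i).prod) *
      aeval (Ik r 1) p = 0 := by
  set S := Algebra.adjoin ℂ (Set.range fun i => Γgen r i ⊗ₜ[ℂ] Γgen r i)
  have : IsMulCommutative S := Algebra.isMulCommutative_adjoin ℂ <| by
    rintro _ ⟨i, rfl⟩ _ ⟨j, rfl⟩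
    exact (Γgen_tmul_commute i j).eq
  let e : Fin (2 * r) → S := fun i => ⟨_, Algebra.subset_adjoin ⟨i, rfl⟩⟩
  have h2 : IsUnit (2 : S) := by
    simpa only [map_ofNat] using (IsUnit.mk0 (2 : ℂ) two_ne_zero).map (algebraMap ℂ S)
  have h := congrArg S.val <|
    one_add_prod_mul_aeval_sum_eq_zero h2 e (fun i => Subtype.ext (Γgen_tmul_sq i)) j p hp
  rw [map_mul, map_add, map_one, map_mul, map_pow, map_neg, map_one, ← List.prod_ofFn,
    map_list_prod, List.map_ofFn, ← aeval_algHom_apply, map_sum, map_zero] at h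
  rwa [Algebra.smul_def, map_pow, map_neg, map_one, Ik_one]

lemma ofFn_prod_tmul_eq_Γtop_tmul (hre : Even r) :
    (List.ofFn fun i => Γgen r i ⊗ₜ[ℂ] Γgen r i).prod = Γtop r ⊗ₜ[ℂ] Γtop r := by
  rw [List.ofFn_eq_map, List.prod_map_tmul, ← List.ofFn_eq_map, Γtop,
    TensorProduct.smul_tmul_smul, ← mul_pow, neg_mul_neg, Complex.I_mul_I, hre.neg_one_pow,
    one_smul]

lemma ppCh_mul_Γtop_tmul {ε ε' : ℂ} (hε : ε * ε = 1) (hε' : ε' * ε' = 1) :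
    ppCh r ε ε' * (Γtop r ⊗ₜ[ℂ] Γtop r) = (ε * ε') • ppCh r ε ε' := by
  rw [ppCh, Algebra.TensorProduct.tmul_mul_tmul, pCh_mul_Γtop hε, pCh_mul_Γtop hε',
    TensorProduct.smul_tmul_smul]

lemma ppCh_mul_aeval_Ik_one_eq_zero (hre : Even r) {ε ε' : ℂ} (hε : ε * ε = 1)
    (hε' : ε' * ε' = 1) (j : ℕ) (hj : ε * ε' = (-1) ^ j) (p : ℂ[X])
    (hp : ∀ c ≤ 2 * r, Even (c + j) → p.eval (2 * r - 2 * c : ℂ) = 0) :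
    ppCh r ε ε' * aeval (Ik r 1) p = 0 := by
  have hproj :
      ppCh r ε ε' * (1 + (-1 : ℂ) ^ j • (Γtop r ⊗ₜ[ℂ] Γtop r)) = (2 : ℂ) • ppCh r ε ε' := by
    rw [mul_add, mul_one, mul_smul_comm, ppCh_mul_Γtop_tmul hε hε', hj, smul_smul, ← pow_add,
      ← two_mul, pow_mul, neg_one_sq, one_pow, one_smul, two_smul]
  have h := one_add_mul_aeval_Ik_one_eq_zero j p (by exact_mod_cast hp)
  rw [ofFn_prod_tmul_eq_Γtop_tmul hre] at h
  have : (2 : ℂ) • (ppCh r ε ε' * aeval (Ik r 1) p) = 0 := by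
    rw [← smul_mul_assoc, ← hproj, mul_assoc, h, mul_zero]
  exact (smul_eq_zero.mp this).resolve_left two_ne_zero

lemma list_prod_map_sC_sub_cEv {ι : Type*} (hr : r ≠ 1) (l : List ι) (k : ι → ℕ) :
    (l.map fun m => sC r - cEv r (k m) • 1).prod =
      aeval (Ik r 1) (l.map fun m => casimirFactor r (k m)).prod := by
  rw [map_list_prod, List.map_map]
  exact congrArg _ (List.map_congr_left fun m _ => sC_sub_cEv_smul_one hr (k m))

lemma eval_prod_casimirFactor_eq_zero {ι : Type*} {l : List ι} {k : ι → ℕ} {c : ℕ}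
    (h : ∃ m ∈ l, k m = c ∨ c + k m = 2 * r) :
    ((l.map fun m => casimirFactor r (k m)).prod).eval (2 * r - 2 * c : ℂ) = 0 := by
  obtain ⟨m, hm, hc⟩ := h
  rw [eval_list_prod]
  refine List.prod_eq_zero (List.mem_map.mpr ⟨_, List.mem_map.mpr ⟨m, hm, rfl⟩, ?_⟩)
  simp only [casimirFactor, eval_mul, eval_C, eval_sub, eval_pow, eval_X]
  rcases hc with hc | hc
  · rw [hc, sub_self, mul_zero]
  · have hc' : (c + k m : ℂ) = 2 * r := by exact_mod_cast hc
    linear_combination (-4 * (-(16 * (2 * r - 2) : ℂ)⁻¹) * (k m - c)) * hc'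

end Clifford

lemma exists_odd_mem_range_eq_or_add_eq {r c : ℕ} (hre : Even r) (hc : c ≤ 2 * r)
    (hodd : Odd c) : ∃ m ∈ List.range (r / 2), 2 * m + 1 = c ∨ c + (2 * m + 1) = 2 * r := by
  obtain ⟨s, hs⟩ := hre
  obtain ⟨t, ht⟩ := hodd
  by_cases h : 2 * t < r
  · exact ⟨t, List.mem_range.mpr (by omega), .inl (by omega)⟩
  · exact ⟨r - 1 - t, List.mem_range.mpr (by omega), .inr (by omega)⟩

lemma exists_even_mem_range_eq_or_add_eq {r c : ℕ} (hre : Even r) (hc : c ≤ 2 * r)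
    (heven : Even c) : ∃ m ∈ List.range (r / 2 + 1), 2 * m = c ∨ c + 2 * m = 2 * r := by
  obtain ⟨s, hs⟩ := hre
  obtain ⟨t, ht⟩ := heven
  by_cases h : 2 * t ≤ r
  · exact ⟨t, List.mem_range.mpr (by omega), .inl (by omega)⟩
  · exact ⟨r - t, List.mem_range.mpr (by omega), .inr (by omega)⟩

/-- for even `r`,
`p_{ε,−ε}·Π_{m=1}^{r/2} (Ĉ − c_{2m−1}·1) = 0` and
`p_{εε}·Π_{m=0}^{r/2} (Ĉ − c_{2m}·1) = 0`. -/
theorem sC_char_idens_even_r (r : ℕ) (hr : 2 ≤ r) (hre : Even r)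
    (ε : ℂ) (hε : ε = 1 ∨ ε = -1) :
    ppCh r ε (-ε) * ((List.range (r/2)).map (fun m => sC r - cEv r (2*m+1) • 1)).prod = 0 ∧
    ppCh r ε ε * ((List.range (r/2+1)).map (fun m => sC r - cEv r (2*m) • 1)).prod = 0 := by
  have hr1 : r ≠ 1 := by omega
  have hε2 : ε * ε = 1 := by rcases hε with rfl | rfl <;> norm_num
  rw [list_prod_map_sC_sub_cEv hr1, list_prod_map_sC_sub_cEv hr1]
  constructor
  · refine ppCh_mul_aeval_Ik_one_eq_zero hre hε2 (by rwa [neg_mul_neg]) 1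
      (by linear_combination -hε2) _ fun c hc hcj => eval_prod_casimirFactor_eq_zero ?_
    exact exists_odd_mem_range_eq_or_add_eq hre hc
      (Nat.not_even_iff_odd.mp (Nat.even_add_one.mp hcj))
  · exact ppCh_mul_aeval_Ik_one_eq_zero hre hε2 hε2 0 (by rw [hε2, pow_zero]) _ fun c hc hcj =>
      eval_prod_casimirFactor_eq_zero (exists_even_mem_range_eq_or_add_eq hre hc hcj)

end
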